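/- Let φ_ρ(x,y) = (2π√(1−ρ²))^{−1} exp(−(x² − 2ρxy + y²)/(2(1−ρ²))) be the bivariate standard normal density with correlation ρ ∈ (−1,1). For T > 0, u sufficiently large, and ν̄ = (1 − (T/2)u^{−2})^{−1/2}, one has φ_ρ(ν̄x, ν̄y) ≤ φ_ρ(x,y)·exp(−(T u^{−2}/4)·x²) for all real x, y. -/
import Mathlib


noncomputable def biNormalPDF (ρ x y : ℝ) : ℝ :=
  (2 * Real.pi * Real.sqrt (1 - ρ ^ 2))⁻¹
    * Real.exp (-(x ^ 2 - 2 * ρ * x * y + y ^ 2) / (2 * (1 - ρ ^ 2)))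

theorem stmt10 (ρ T u : ℝ) (hρ : -1 < ρ) (hρ1 : ρ < 1) (hT : 0 < T) (hu : 0 < u)
    (hTu : T / u ^ 2 < 1) (x y : ℝ) :
    biNormalPDF ρ ((1 - T / 2 * u⁻¹ ^ 2)⁻¹ ^ ((1 : ℝ) / 2) * x)
        ((1 - T / 2 * u⁻¹ ^ 2)⁻¹ ^ ((1 : ℝ) / 2) * y)
      ≤ biNormalPDF ρ x y * Real.exp (-(T * u⁻¹ ^ 2 / 4) * x ^ 2) := by
  have hu2 : (0:ℝ) < u ^ 2 := by positivity
  set a : ℝ := T / 2 * u⁻¹ ^ 2 with ha_def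
  have ha0 : 0 < a := by positivity
  have ha1 : a < 1 := by
    have h : a = T / u ^ 2 / 2 := by
      rw [ha_def]; field_simp
    rw [h]; nlinarith [div_pos hT hu2]
  have h1a : 0 < 1 - a := by linarith
  set ν : ℝ := (1 - a)⁻¹ ^ ((1 : ℝ) / 2) with hν_def
  have hν : ν ^ 2 = (1 - a)⁻¹ := by
    rw [hν_def, ← Real.rpow_natCast ((1 - a)⁻¹ ^ ((1:ℝ)/2)) 2,
      ← Real.rpow_mul (by positivity)]
    norm_num
  have hρ2 : 0 < 1 - ρ ^ 2 := by nlinarith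
  have hD : (0:ℝ) < 2 * (1 - ρ ^ 2) := by linarith
  unfold biNormalPDF
  have hC : 0 < (2 * Real.pi * Real.sqrt (1 - ρ ^ 2))⁻¹ := by
    have := Real.pi_pos
    positivity
  rw [mul_assoc ((2 * Real.pi * Real.sqrt (1 - ρ ^ 2))⁻¹), ← Real.exp_add]
  apply mul_le_mul_of_nonneg_left _ hC.le
  apply Real.exp_le_exp.mpr
  set s : ℝ := (1 - a)⁻¹ with hs_def
  have hs1 : s * (1 - a) = 1 := inv_mul_cancel₀ h1a.ne'
  have hs_ge : 1 ≤ s := by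
    rw [hs_def]
    rw [le_inv_comm₀ one_pos h1a] <;> simp <;> linarith
  have hA : (ν * x) ^ 2 - 2 * ρ * (ν * x) * (ν * y) + (ν * y) ^ 2
      = s * (x ^ 2 - 2 * ρ * x * y + y ^ 2) := by
    linear_combination (x ^ 2 - 2 * ρ * x * y + y ^ 2) * hν
  rw [hA]
  have hc : -(T * u⁻¹ ^ 2 / 4) * x ^ 2 = -(a / 2 * x ^ 2) := by
    rw [ha_def]; ring
  rw [hc]
  have hQ0 : 0 ≤ x ^ 2 - 2 * ρ * x * y + y ^ 2 := by nlinarith [sq_nonneg (y - ρ * x)]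
  have hQ : (1 - ρ ^ 2) * x ^ 2 ≤ x ^ 2 - 2 * ρ * x * y + y ^ 2 := by
    nlinarith [sq_nonneg (y - ρ * x)]
  have key : (x ^ 2 - 2 * ρ * x * y + y ^ 2) + a / 2 * x ^ 2 * (2 * (1 - ρ ^ 2))
      ≤ s * (x ^ 2 - 2 * ρ * x * y + y ^ 2) := by
    nlinarith [mul_nonneg (mul_nonneg ha0.le (sub_nonneg.2 hs_ge)) hQ0,
      mul_le_mul_of_nonneg_left hQ ha0.le]
  have hcomb : -(x ^ 2 - 2 * ρ * x * y + y ^ 2) / (2 * (1 - ρ ^ 2)) + -(a / 2 * x ^ 2)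
      = (-(x ^ 2 - 2 * ρ * x * y + y ^ 2) - a / 2 * x ^ 2 * (2 * (1 - ρ ^ 2)))
        / (2 * (1 - ρ ^ 2)) := by
    field_simp
    ring
  rw [hcomb, div_le_div_iff_of_pos_right hD]
  linarith
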